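/- arXiv:1511.08606 — 3 statements merged into one kernel-verified Lean document; each statement's English description precedes it below -/
import Mathlib

section
/- Let R be a commutative ring, let V be an R-module, and let A : V → V be an R-linear endomorphism. Consider the R-linear endomorphism Θ of V^r (r ≥ 1) given by Θ(X_1, …, X_r) = (X_2, …, X_r, A(X_1)). If V is finite free, then det(1 - Θ) = det(1 - A), where 1 denotes the identity endomorphism. -/
/-!
Let `U` be the suffix-sum map `(U X)ᵢ = ∑_{j ≥ i} Xⱼ` on `V^r`. It is block upper unitriangular,
so `det U = 1`, while `(1 - Θ) ∘ U` sends `X` to `(X₁, …, X_{r-1}, X_r - A (∑ⱼ Xⱼ))`, which is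
block lower triangular with diagonal blocks `1, …, 1, 1 - A`. Hence `det (1 - Θ) = det (1 - A)`.
-/

section

variable {R V : Type*} [CommRing R] [AddCommGroup V] [Module R V]

/-- `hfg` says that `f` is block upper triangular on `V^ι`, with diagonal blocks `g i`. -/
theorem LinearMap.det_eq_prod_det_of_upperTriangular [Module.Free R V] [Module.Finite R V]
    {ι : Type*} [Fintype ι] [LinearOrder ι]
    (f : (ι → V) →ₗ[R] ι → V) (g : ι → V →ₗ[R] V)
    (hfg : ∀ X i, (∀ j, i < j → X j = 0) → f X i = g i (X i)) :
    LinearMap.det f = ∏ i, LinearMap.det (g i) := by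
  classical
  let b := Module.Free.chooseBasis R V
  let B := Pi.basis fun _ : ι => b
  have hf_single : ∀ i j (v : V), j ≤ i →
      f (Pi.single j v) i = g i ((Pi.single j v : ι → V) i) := fun i j v hji =>
    hfg _ i fun k hik => by simp [(hji.trans_lt hik).ne']
  have htri : (toMatrix B B f).BlockTriangular Sigma.fst := by
    intro p q hqp
    simp [B, toMatrix_apply, hf_single _ _ _ hqp.le, hqp.ne]
  rw [← det_toMatrix B, htri.det_fintype]
  refine Fintype.prod_congr _ _ fun i => ?_
  rw [← det_toMatrix b, ← Matrix.det_submatrix_equiv_self (Equiv.sigmaSubtype i).symm]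
  congr 1
  ext k l
  simp [B, Matrix.toSquareBlock_def, toMatrix_apply, hf_single]

theorem LinearMap.det_eq_prod_det_of_lowerTriangular [Module.Free R V] [Module.Finite R V]
    {ι : Type*} [Fintype ι] [LinearOrder ι]
    (f : (ι → V) →ₗ[R] ι → V) (g : ι → V →ₗ[R] V)
    (hfg : ∀ X i, (∀ j, j < i → X j = 0) → f X i = g i (X i)) :
    LinearMap.det f = ∏ i, LinearMap.det (g i) :=
  det_eq_prod_det_of_upperTriangular (ι := ιᵒᵈ) f g hfg

variable (R V) in
def suffixSum (r : ℕ) : (Fin r → V) →ₗ[R] Fin r → V :=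
  LinearMap.pi fun i => ∑ j ∈ Finset.Ici i, LinearMap.proj j

@[simp]
theorem suffixSum_apply {r : ℕ} (X : Fin r → V) (i : Fin r) :
    suffixSum R V r X i = ∑ j ∈ Finset.Ici i, X j := by
  simp [suffixSum]

theorem det_suffixSum [Module.Free R V] [Module.Finite R V] (r : ℕ) :
    LinearMap.det (suffixSum R V r) = 1 := by
  rw [LinearMap.det_eq_prod_det_of_upperTriangular _ fun _ => LinearMap.id,
    Fintype.prod_eq_one _ fun _ => LinearMap.det_id]
  intro X i hX
  rw [suffixSum_apply, Finset.sum_eq_single_of_mem i (Finset.mem_Ici.2 le_rfl) fun j hj hji =>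
    hX j (lt_of_le_of_ne (Finset.mem_Ici.1 hj) (Ne.symm hji))]
  rfl

def twistedShift (r : ℕ) [NeZero r] (A : V →ₗ[R] V) : (Fin r → V) →ₗ[R] Fin r → V :=
  LinearMap.pi fun i =>
    if h : (i : ℕ) + 1 < r then LinearMap.proj ⟨i + 1, h⟩ else A ∘ₗ LinearMap.proj 0

theorem twistedShift_apply (r : ℕ) [NeZero r] (A : V →ₗ[R] V) (X : Fin r → V) (i : Fin r) :
    twistedShift r A X i = if h : (i : ℕ) + 1 < r then X ⟨i + 1, h⟩ else A (X 0) := by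
  simp only [twistedShift, LinearMap.pi_apply]
  split_ifs <;> rfl

theorem id_sub_twistedShift_comp_suffixSum_apply {r : ℕ} [NeZero r] (A : V →ₗ[R] V)
    (X : Fin r → V) (i : Fin r) :
    ((LinearMap.id - twistedShift r A : Module.End R (Fin r → V)) ∘ₗ suffixSum R V r) X i =
      if (i : ℕ) + 1 < r then X i else X i - A (∑ j, X j) := by
  simp only [LinearMap.comp_apply, LinearMap.sub_apply, LinearMap.id_apply, Pi.sub_apply,
    twistedShift_apply, suffixSum_apply]
  split_ifs with h
  · have hIoi : Finset.Ioi i = Finset.Ici ⟨i + 1, h⟩ := Finset.ext fun j => by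
      simp only [Finset.mem_Ioi, Finset.mem_Ici, Fin.lt_def, Fin.le_def]; omega
    rw [← Finset.Ioi_insert, Finset.sum_insert Finset.notMem_Ioi_self, hIoi, add_sub_cancel_right]
  · have hIci : Finset.Ici i = {i} := Finset.ext fun j => by
      simp only [Finset.mem_Ici, Finset.mem_singleton, Fin.le_def, Fin.ext_iff]; omega
    have hIci_zero : Finset.Ici (0 : Fin r) = Finset.univ := Finset.ext fun j => by simp
    rw [hIci, hIci_zero, Finset.sum_singleton]

theorem det_id_sub_twistedShift [Module.Free R V] [Module.Finite R V] {r : ℕ} [NeZero r]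
    (A : V →ₗ[R] V) :
    LinearMap.det (LinearMap.id - twistedShift r A) = LinearMap.det (LinearMap.id - A) := by
  have hr := NeZero.pos r
  let last : Fin r := ⟨r - 1, by omega⟩
  calc LinearMap.det (LinearMap.id - twistedShift r A)
      = LinearMap.det ((LinearMap.id - twistedShift r A) ∘ₗ suffixSum R V r) := by
        rw [LinearMap.det_comp, det_suffixSum, mul_one]
    _ = ∏ i : Fin r,
          LinearMap.det (if (i : ℕ) + 1 < r then LinearMap.id else LinearMap.id - A) := by
        refine LinearMap.det_eq_prod_det_of_lowerTriangular _ _ fun X i hX => ?_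
        rw [id_sub_twistedShift_comp_suffixSum_apply]
        split_ifs with hi
        · rfl
        · rw [Finset.sum_eq_single i
            (fun j _ hji => hX j (lt_of_le_of_ne (Fin.le_def.2 (by omega)) hji))
            fun h => absurd (Finset.mem_univ i) h]
          rfl
    _ = LinearMap.det (LinearMap.id - A) := by
        refine (Fintype.prod_eq_single last fun i hi => ?_).trans
          (congrArg LinearMap.det (if_neg (show ¬r - 1 + 1 < r by omega)))
        have : (i : ℕ) ≠ r - 1 := Fin.val_ne_of_ne hi
        rw [if_pos (by omega), LinearMap.det_id]

end

/-- Let `R` be a commutative ring, `V` a finite free `R`-module, `A : V → V` an `R`-linear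
endomorphism, and `Θ` the endomorphism of `V^r` (`r ≥ 1`) given by
`Θ(X_1, …, X_r) = (X_2, …, X_r, A X_1)`. Then `det (1 - Θ) = det (1 - A)`. -/
theorem stmt0 (R : Type*) [CommRing R] (V : Type*) [AddCommGroup V] [Module R V]
    [Module.Free R V] [Module.Finite R V]
    (r : ℕ) (hr : 1 ≤ r) (A : V →ₗ[R] V)
    (Θ : (Fin r → V) →ₗ[R] (Fin r → V))
    (hΘ : ∀ (X : Fin r → V) (i : Fin r),
      Θ X i = if h : (i : ℕ) + 1 < r then X ⟨(i : ℕ) + 1, h⟩ else A (X ⟨0, by omega⟩)) :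
    LinearMap.det (LinearMap.id - Θ) = LinearMap.det (LinearMap.id - A) := by
  have : NeZero r := ⟨by omega⟩
  obtain rfl : Θ = twistedShift r A :=
    LinearMap.ext fun X => funext fun i => by rw [hΘ, twistedShift_apply]; rfl
  exact det_id_sub_twistedShift A
end

section
/- Let z, ζ ∈ ℂ^×, let m ≥ 1 and 1 ≤ a ≤ m-1 with gcd(a, m) = 1. Consider the system of m equations in the unknowns ζ_1, …, ζ_m ∈ ℂ: ζ_{m-a+i} = ζ · ζ_i for 1 ≤ i ≤ a, and ζ_{a+j} = ζ^{-1} z · ζ_j for 1 ≤ j ≤ m-a (indices taken in {1,…,m}). Then this linear system has a nonzero solution if and only if ζ^m = z^{m-a}; moreover in that case the solution space is one-dimensional and every nonzero solution has all coordinates nonzero. -/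
/-!
Read the indices modulo `m`: the system says `v (k + a) = c k * v k`, where `c k = ζ⁻¹ z` if
`k + a` does not wrap around and `c k = ζ⁻¹` if it does. As `a` is prime to `m`, `k ↦ k + a` is a
single `m`-cycle, so a solution vanishing at one index vanishes everywhere, and a solution is
determined by one coordinate. Multiplying the relations around the cycle gives
`∏ c = ζ⁻ᵐ z^(m-a) = 1`. Conversely Bézout gives `w` with `w^(m-a) = ζ` and `w^a = ζ⁻¹ z`, and then
`k ↦ w^k` is a solution.
-/

open Equiv Equiv.Perm Finset

namespace Equiv.Perm

variable {α K : Type*} {σ : Perm α} {c v : α → K}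

theorem SameCycle.apply_eq_zero_iff [MulZeroClass K] [NoZeroDivisors K] (hc : ∀ x, c x ≠ 0)
    (hv : ∀ x, v (σ x) = c x * v x) {x y : α} (hxy : σ.SameCycle x y) : v x = 0 ↔ v y = 0 := by
  have step : ∀ x, v (σ x) = 0 ↔ v x = 0 := fun x => by simp [hv, hc]
  obtain ⟨i, rfl⟩ := hxy
  induction i using Int.induction_on with
  | zero => rfl
  | succ i ih => rwa [add_comm, zpow_one_add, mul_apply, step]
  | pred i ih =>
    refine ih.trans ?_
    rw [sub_eq_add_neg, add_comm, zpow_add, zpow_neg_one, mul_apply, ← step (σ⁻¹ _), coe_inv,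
      apply_symm_apply]

theorem IsCycleOn.eq_zero_of_apply_eq_zero [MulZeroClass K] [NoZeroDivisors K]
    (hσ : σ.IsCycleOn .univ) (hc : ∀ x, c x ≠ 0) (hv : ∀ x, v (σ x) = c x * v x) {x : α}
    (hx : v x = 0) : v = 0 :=
  funext fun y => ((hσ.2 (Set.mem_univ x) (Set.mem_univ y)).apply_eq_zero_iff hc hv).1 hx

theorem IsCycleOn.eq_smul_of_apply_eq_mul [Field K] (hσ : σ.IsCycleOn .univ) (hc : ∀ x, c x ≠ 0)
    {w : α → K} (hv : ∀ x, v (σ x) = c x * v x) (hw : ∀ x, w (σ x) = c x * w x) {x : α}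
    (hvx : v x ≠ 0) : w = (w x / v x) • v := by
  refine sub_eq_zero.1 (hσ.eq_zero_of_apply_eq_zero hc (x := x) (fun y => ?_) ?_)
  · simp only [Pi.sub_apply, Pi.smul_apply, smul_eq_mul, hv, hw]
    ring
  · simp [hvx]

theorem prod_eq_one_of_apply_eq_mul [Fintype α] [CommMonoidWithZero K] [IsRightCancelMulZero K]
    (hv : ∀ x, v (σ x) = c x * v x) (hv0 : ∏ x, v x ≠ 0) : ∏ x, c x = 1 := by
  rw [← mul_eq_right₀ hv0, ← prod_mul_distrib]
  simp_rw [← hv]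
  exact Equiv.prod_comp σ v

end Equiv.Perm

theorem isCycleOn_finCycle {n : ℕ} {k : Fin n} (hk : Nat.Coprime k n) :
    (finCycle k).IsCycleOn .univ := by
  rcases lt_or_ge n 2 with hn | hn
  · have : Subsingleton (Fin n) := Fin.subsingleton_iff_le_one.2 (by omega)
    exact isCycleOn_of_subsingleton _ _
  have hrot := isCycle_finRotate_of_le hn
  have hord : orderOf (finRotate n) = n := by
    rw [hrot.orderOf, support_finRotate_of_le hn, card_univ, Fintype.card_fin]
  have hpow : finCycle k = finRotate n ^ (k : ℕ) := by
    ext1 i; rw [finCycle_eq_finRotate_iterate, coe_pow]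
  replace hk : Nat.Coprime k (orderOf (finRotate n)) := by rwa [hord]
  have hsupp : {x | finCycle k x ≠ x} = Set.univ := by
    classical
    ext x
    simp [← mem_support, hpow, support_pow_coprime hk, support_finRotate_of_le hn]
  rw [← hsupp]
  exact hpow ▸ (hrot.pow_iff.2 hk).isCycleOn

theorem exists_pow_eq_and_pow_eq_of_coprime {G : Type*} [CommGroup G] {p q : ℕ}
    (hpq : p.Coprime q) {x y : G} (hxy : x ^ q = y ^ p) : ∃ w : G, w ^ p = x ∧ w ^ q = y := by
  have hbez : (p : ℤ) * p.gcdA q + q * p.gcdB q = 1 := by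
    rw [← Nat.gcd_eq_gcd_ab, hpq, Nat.cast_one]
  have hxy' : x ^ (q : ℤ) = y ^ (p : ℤ) := by exact_mod_cast hxy
  refine ⟨x ^ p.gcdA q * y ^ p.gcdB q, ?_, ?_⟩
  · rw [← zpow_natCast, mul_zpow, ← zpow_mul, ← zpow_mul, mul_comm _ (p : ℤ), mul_comm _ (p : ℤ),
      zpow_mul y, ← hxy', ← zpow_mul, ← zpow_add, hbez, zpow_one]
  · rw [← zpow_natCast, mul_zpow, ← zpow_mul, ← zpow_mul, mul_comm _ (q : ℤ), mul_comm _ (q : ℤ),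
      zpow_mul x, hxy', ← zpow_mul, ← zpow_add, hbez, zpow_one]

section ShiftSystem

variable {K : Type*} [Field K] {m a : ℕ} {ζ z : K}

def shiftCoeff (m a : ℕ) (ζ z : K) (k : Fin m) : K := ζ⁻¹ * if (k : ℕ) < m - a then z else 1

theorem shiftCoeff_ne_zero (hζ : ζ ≠ 0) (hz : z ≠ 0) (k : Fin m) : shiftCoeff m a ζ z k ≠ 0 := by
  unfold shiftCoeff
  split_ifs <;> simp [hζ, hz]

theorem prod_shiftCoeff : ∏ k, shiftCoeff m a ζ z k = ζ⁻¹ ^ m * z ^ (m - a) := by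
  simp only [shiftCoeff, prod_mul_distrib, prod_const, card_univ, Fintype.card_fin, prod_ite,
    one_pow, mul_one, Fin.card_filter_val_lt, min_eq_right (Nat.sub_le m a)]

theorem apply_finCycle_eq_shiftCoeff_mul (ham : a < m) (hζ : ζ ≠ 0) {v : Fin m → K}
    (h1 : ∀ i : ℕ, ∀ _ : i < a, v ⟨i + (m - a), by omega⟩ = ζ * v ⟨i, by omega⟩)
    (h2 : ∀ j : ℕ, ∀ _ : j < m - a, v ⟨j + a, by omega⟩ = ζ⁻¹ * z * v ⟨j, by omega⟩)
    (k : Fin m) : v (finCycle ⟨a, ham⟩ k) = shiftCoeff m a ζ z k * v k := by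
  obtain ⟨k, hk⟩ := k
  rw [shiftCoeff, Fin.val_mk]
  split_ifs with hka
  · have hσk : finCycle ⟨a, ham⟩ ⟨k, hk⟩ = ⟨k + a, by omega⟩ :=
      Fin.ext (by simp [Fin.val_add, Nat.mod_eq_of_lt (by omega : k + a < m)])
    rw [hσk, h2 k hka, mul_assoc]
  · have hσk : finCycle ⟨a, ham⟩ ⟨k, hk⟩ = ⟨k + a - m, by omega⟩ := Fin.ext (by
      simp [Fin.val_add, Nat.mod_eq_sub_mod (by omega : m ≤ k + a),
        Nat.mod_eq_of_lt (by omega : k + a - m < m)])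
    have h := h1 (k + a - m) (by omega)
    simp only [show k + a - m + (m - a) = k by omega] at h
    rw [hσk, h]
    field_simp

theorem exists_pow_sub_eq_and_pow_eq (hζ : ζ ≠ 0) (hz : z ≠ 0) (hle : a ≤ m)
    (hgcd : Nat.Coprime a m) (h : ζ ^ m = z ^ (m - a)) : ∃ w : K, w ^ (m - a) = ζ ∧ w ^ a = ζ⁻¹ * z := by
  have hpow : ζ ^ a = (ζ⁻¹ * z) ^ (m - a) := by
    rw [mul_pow, inv_pow, ← h, ← Nat.sub_add_cancel hle, pow_add, Nat.add_sub_cancel]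
    field_simp
  obtain ⟨w, hwζ, hwz⟩ := exists_pow_eq_and_pow_eq_of_coprime
    ((Nat.coprime_sub_self_left hle).2 hgcd.symm) (x := Units.mk0 ζ hζ)
    (y := Units.mk0 (ζ⁻¹ * z) (by simp [hζ, hz])) (Units.ext (by simpa using hpow))
  exact ⟨w, by simpa using congrArg Units.val hwζ, by simpa using congrArg Units.val hwz⟩

end ShiftSystem

/-- The linear system `ζ_{m-a+i} = ζ ζ_i` (`1 ≤ i ≤ a`), `ζ_{a+j} = ζ⁻¹ z ζ_j` (`1 ≤ j ≤ m-a`)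
in `ℂ^m` (with `gcd(a,m) = 1`) has a nonzero solution iff `ζ^m = z^{m-a}`, in which case the
solution space is one-dimensional and every nonzero solution has all coordinates nonzero. -/
theorem stmt3 (m a : ℕ) (hm : 1 ≤ m) (ha2 : a ≤ m - 1)
    (hgcd : Nat.gcd a m = 1) (ζ z : ℂ) (hζ : ζ ≠ 0) (hz : z ≠ 0)
    (S : Set (Fin m → ℂ))
    (hS : S = {v | (∀ i : ℕ, ∀ _ : i < a, v ⟨i + (m - a), by omega⟩ = ζ * v ⟨i, by omega⟩) ∧
        (∀ j : ℕ, ∀ _ : j < m - a, v ⟨j + a, by omega⟩ = ζ⁻¹ * z * v ⟨j, by omega⟩)}) :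
    ((∃ v ∈ S, v ≠ 0) ↔ ζ ^ m = z ^ (m - a)) ∧
      (ζ ^ m = z ^ (m - a) →
        (∃ v ∈ S, v ≠ 0 ∧ ∀ w ∈ S, ∃ t : ℂ, w = t • v) ∧
        (∀ v ∈ S, v ≠ 0 → ∀ i, v i ≠ 0)) := by
  have ham : a < m := by omega
  have hσ : (finCycle (⟨a, ham⟩ : Fin m)).IsCycleOn .univ := isCycleOn_finCycle hgcd
  have hc := shiftCoeff_ne_zero (m := m) (a := a) hζ hz
  have hstep : ∀ v ∈ S, ∀ k, v (finCycle ⟨a, ham⟩ k) = shiftCoeff m a ζ z k * v k := by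
    subst hS
    exact fun v hv => apply_finCycle_eq_shiftCoeff_mul ham hζ hv.1 hv.2
  have hnz : ∀ v ∈ S, v ≠ 0 → ∀ i, v i ≠ 0 := fun v hv hv0 i hi =>
    hv0 (hσ.eq_zero_of_apply_eq_zero hc (hstep v hv) hi)
  have hcrit : ∀ v ∈ S, v ≠ 0 → ζ ^ m = z ^ (m - a) := fun v hv hv0 => by
    have h := prod_eq_one_of_apply_eq_mul (hstep v hv)
      (prod_ne_zero_iff.2 fun i _ => hnz v hv hv0 i)
    rwa [prod_shiftCoeff, inv_pow, inv_mul_eq_one₀ (pow_ne_zero m hζ)] at h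
  have hsol : ζ ^ m = z ^ (m - a) → ∃ v ∈ S, v ⟨0, hm⟩ ≠ 0 := fun h => by
    obtain ⟨w, hwζ, hwz⟩ := exists_pow_sub_eq_and_pow_eq hζ hz ham.le hgcd h
    refine ⟨fun k => w ^ (k : ℕ), hS ▸ ⟨fun i _ => ?_, fun j _ => ?_⟩, by simp⟩
    · simp only [pow_add, hwζ, mul_comm]
    · simp only [pow_add, hwz, mul_comm]
  refine ⟨⟨fun ⟨v, hv, hv0⟩ => hcrit v hv hv0, fun h => ?_⟩, fun h => ⟨?_, hnz⟩⟩ <;>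
    obtain ⟨v, hv, hv0⟩ := hsol h
  · exact ⟨v, hv, fun h0 => hv0 (congrFun h0 _)⟩
  · exact ⟨v, hv, fun h0 => hv0 (congrFun h0 _), fun w hw =>
      ⟨_, hσ.eq_smul_of_apply_eq_mul hc (hstep v hv) (hstep w hw) hv0⟩⟩
end

section
/- Let m > 1 and let a, b, e be positive integers with bm - ae = 1 (so gcd(e,m)=1 and gcd(a,m)=1). Let G be a group, φ an automorphism of G, and g, c, h elements with: h^a = c^{-1} φ^m(c) and h^b = c^{-1} g φ^e(c), where h is fixed by φ (φ(h) = h). Then N(g) := g · φ^e(g) · φ^{2e}(g) ⋯ φ^{(m-1)e}(g) satisfies N(g) = c h c^{-1}. -/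
/-!
With `ψ = φ^e`, the hypothesis on `h^b` says `g = c · h^b · ψ(c)⁻¹`; as `h^b` is `ψ`-fixed, the
twisted norm telescopes to `c · h^{bm} · ψ^m(c)⁻¹`. Iterating `φ^m(c) = c · h^a` `e` times gives
`ψ^m(c) = φ^{em}(c) = c · h^{ae}`, and `bm = ae + 1` leaves `c · h · c⁻¹`.
-/

namespace MulAut

variable {G : Type*} [Group G]

lemma pow_apply_eq_self {φ : MulAut G} {x : G} (hx : φ x = x) (n : ℕ) : (φ ^ n) x = x := by
  induction n with
  | zero => rfl
  | succ n ih => rw [pow_succ, mul_apply, hx, ih]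

lemma pow_apply_eq_mul_pow {ψ : MulAut G} {c y : G} (hy : ψ y = y) (hc : ψ c = c * y) (n : ℕ) :
    (ψ ^ n) c = c * y ^ n := by
  induction n with
  | zero => simp
  | succ n ih =>
    rw [pow_succ, mul_apply, hc, map_mul, ih, pow_apply_eq_self hy, mul_assoc, ← pow_succ]

lemma prod_ofFn_pow_apply_mul_mul_inv {ψ : MulAut G} {c x : G} (hx : ψ x = x) (n : ℕ) :
    (List.ofFn fun k : Fin n => (ψ ^ (k : ℕ)) (c * x * (ψ c)⁻¹)).prod =
      c * x ^ n * ((ψ ^ n) c)⁻¹ := by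
  induction n with
  | zero => simp
  | succ n ih =>
    rw [List.ofFn_succ', List.prod_concat]
    simp only [Fin.val_castSucc, Fin.val_last]
    rw [ih, map_mul, map_mul, map_inv, pow_apply_eq_self hx, pow_succ ψ n, mul_apply, pow_succ x n]
    group

end MulAut

open MulAut in
theorem stmt19_general (G : Type*) [Group G] (φ : MulAut G) (m a b e : ℕ)
    (hbez : b * m = a * e + 1)
    (g c h : G) (hfix : φ h = h)
    (hA : h ^ a = c⁻¹ * (φ ^ m) c)
    (hB : h ^ b = c⁻¹ * g * (φ ^ e) c) :
    (List.ofFn fun k : Fin m => (φ ^ (e * (k : ℕ))) g).prod = c * h * c⁻¹ := by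
  have hfix_pow (n k : ℕ) : (φ ^ n) (h ^ k) = h ^ k := by rw [map_pow, pow_apply_eq_self hfix]
  have hg : g = c * h ^ b * ((φ ^ e) c)⁻¹ := by rw [hB]; group
  have hcm : (φ ^ m) c = c * h ^ a := by rw [hA, mul_inv_cancel_left]
  have hcem : ((φ ^ e) ^ m) c = c * h ^ (a * e) := by
    rw [← pow_mul, mul_comm e m, pow_mul, pow_apply_eq_mul_pow (hfix_pow m a) hcm, ← pow_mul]
  simp_rw [pow_mul φ e]
  rw [hg, prod_ofFn_pow_apply_mul_mul_inv (hfix_pow e b), hcem, ← pow_mul, hbez, pow_succ]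
  group

/-- Kottwitz's norm identity: with `bm - ae = 1`, `φ(h) = h`, `h^a = c⁻¹ φ^m(c)` and
`h^b = c⁻¹ g φ^e(c)`, the twisted norm `N(g) = g · φ^e(g) ⋯ φ^{(m-1)e}(g)` equals
`c h c⁻¹`. -/
theorem stmt19 (G : Type*) [Group G] (φ : MulAut G) (m a b e : ℕ)
    (hm : 1 < m) (ha : 0 < a) (hb : 0 < b) (he : 0 < e)
    (hbez : b * m = a * e + 1)
    (g c h : G) (hfix : φ h = h)
    (hA : h ^ a = c⁻¹ * (φ ^ m) c)
    (hB : h ^ b = c⁻¹ * g * (φ ^ e) c) :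
    (List.ofFn fun k : Fin m => (φ ^ (e * (k : ℕ))) g).prod = c * h * c⁻¹ :=
  stmt19_general G φ m a b e hbez g c h hfix hA hB
end
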